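/- Let S(t) be a complex polynomial of degree m and let Q(t) be a formal power series solution of the ODE (t·Q'' + Q')·Q − t·(Q')² = S·Q with Q(0) ≠ 0, such that Q(0)^{−1} is a common zero of the polynomials f_S^i for all m+3 ≤ i ≤ 2m+3. Then Q(t) is a polynomial of degree exactly m+2. -/

import Mathlib

open PowerSeries

open Polynomial in
/-- The sequence of polynomials `f_S^i` associated to a coefficient sequence `s`. -/
noncomputable def fseq {R : Type*} [CommRing R] [Algebra ℚ R] (s : ℕ → R) : ℕ → Polynomial R
  | 0 => 0
  | 1 => C (s 0)
  | (k+2) =>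
      ((((k : ℚ)+2)^2)⁻¹) •
        (Polynomial.C (s (k+1)) + Polynomial.X *
          ∑ i ∈ (Finset.range (k+1)).attach,
            (Polynomial.C (s i.1) - ((((i.1 : ℤ))+1) * (2*(i.1 : ℤ)+1-((k : ℤ)+1))) • fseq s (i.1+1) ) *
              fseq s (k+1-i.1))
  termination_by k => k
  decreasing_by
  all_goals (first
    | omega
    | (have h := i.2; rw [Finset.mem_range] at h; omega))

/-- A formal power series `Q` solves the ODE
`(t·Q''(t) + Q'(t))·Q(t) − t·(Q'(t))² = S(t)·Q(t)` for the data `S`. -/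
def SolvesODE (S Q : PowerSeries ℂ) : Prop :=
  (X * (d⁄dX ℂ) ((d⁄dX ℂ) Q) + (d⁄dX ℂ) Q) * Q - X * ((d⁄dX ℂ) Q) ^ 2 = S * Q

/-!
Comparing coefficients of `t^k` in the equation gives
`∑_{i ≤ k} (i+1)(2i+1-k) q_{i+1} q_{k-i} = ∑_{i ≤ k} s_i q_{k-i}`.
Its top term `(k+1)² q_{k+1} q_0` determines `q_{k+1}` from the lower coefficients by exactly the
recursion defining `f_S`, so `q_n = f_S^n(1/q_0)` for `n ≥ 1`. If `q` vanishes beyond `d` and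
`k ≥ 2d - 1`, the only cross term that can survive has weight `2i+1-k = 0`. Hence once
`q_{m+3}, …, q_{2m+3}` vanish, the recursion kills every later coefficient, and the coefficient of
`t^{m+d}` shows that a nonzero polynomial solution of degree `d` has `d ≥ m + 2`.
-/

open Finset

namespace PowerSeries

variable {R : Type*} [CommRing R]

theorem coeff_X_mul_derivative (f : R⟦X⟧) (n : ℕ) :
    coeff n (X * d⁄dX R f) = n * coeff n f := by
  cases n with
  | zero => simp
  | succ n => rw [coeff_succ_X_mul, coeff_derivative]; push_cast; ring

theorem coeff_X_mul_derivative_derivative_add_derivative (f : R⟦X⟧) (n : ℕ) :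
    coeff n (X * d⁄dX R (d⁄dX R f) + d⁄dX R f) = ((n : R) + 1) ^ 2 * coeff (n + 1) f := by
  rw [map_add, coeff_X_mul_derivative, coeff_derivative]
  ring

theorem coeff_X_mul_derivative_sq (f : R⟦X⟧) (k : ℕ) :
    coeff k (X * (d⁄dX R f) ^ 2) =
      ∑ i ∈ range (k + 1), ((i : R) + 1) * (k - i) * coeff (i + 1) f * coeff (k - i) f := by
  rw [show X * (d⁄dX R f) ^ 2 = d⁄dX R f * (X * d⁄dX R f) by ring, coeff_mul,
    Nat.sum_antidiagonal_eq_sum_range_succ_mk]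
  refine sum_congr rfl fun i hi => ?_
  rw [coeff_derivative, coeff_X_mul_derivative, Nat.cast_sub (mem_range_succ_iff.mp hi)]
  ring

theorem coeff_ode_lhs (f : R⟦X⟧) (k : ℕ) :
    coeff k ((X * d⁄dX R (d⁄dX R f) + d⁄dX R f) * f - X * (d⁄dX R f) ^ 2) =
      ∑ i ∈ range (k + 1),
        ((i : R) + 1) * (2 * i + 1 - k) * coeff (i + 1) f * coeff (k - i) f := by
  rw [map_sub, coeff_mul, Nat.sum_antidiagonal_eq_sum_range_succ_mk, coeff_X_mul_derivative_sq,
    ← sum_sub_distrib]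
  refine sum_congr rfl fun i _ => ?_
  rw [coeff_X_mul_derivative_derivative_add_derivative]
  ring

theorem eq_trunc_of_coeff_eq_zero {f : R⟦X⟧} {N : ℕ} (hf : ∀ n, N ≤ n → coeff n f = 0) :
    f = trunc N f := by
  ext n
  rw [Polynomial.coeff_coe, coeff_trunc]
  split_ifs with hn
  · rfl
  · exact hf n (not_lt.mp hn)

end PowerSeries

theorem sum_range_ode_terms_eq_zero {R : Type*} [CommRing R] (f : R⟦X⟧) {d k : ℕ}
    (hdk : 2 * d ≤ k + 1) (hf : ∀ n, d < n → n ≤ k → coeff n f = 0) :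
    ∑ i ∈ range k, ((i : R) + 1) * (2 * i + 1 - k) * coeff (i + 1) f * coeff (k - i) f = 0 := by
  refine sum_eq_zero fun i hi => ?_
  have hik := mem_range.mp hi
  by_cases hi1 : d < i + 1
  · rw [hf (i + 1) hi1 hik, mul_zero, zero_mul]
  by_cases hi2 : d < k - i
  · rw [hf (k - i) hi2 (by omega), mul_zero]
  -- both factors survive only when `i + 1 = d` and `k = 2 * d - 1`, where the weight vanishes
  have hk : (k : R) = 2 * i + 1 := by rw [show k = 2 * i + 1 by omega]; push_cast; ring
  rw [hk, sub_self, mul_zero, zero_mul, zero_mul]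

open Polynomial in
theorem fseq_eval_succ (s : ℕ → ℂ) (u : ℂ) (k : ℕ) :
    (fseq s (k + 1)).eval u =
      (((k : ℂ) + 1) ^ 2)⁻¹ * (s k + u * ∑ i ∈ range k,
        (s i - ((i : ℂ) + 1) * (2 * i + 1 - k) * (fseq s (i + 1)).eval u) *
          (fseq s (k - i)).eval u) := by
  cases k with
  | zero => simp [fseq]
  | succ k =>
    rw [fseq, eval_smul, eval_add, eval_C, eval_mul, eval_X, eval_finsetSum,
      sum_attach (range (k + 1)) fun i => eval u ((Polynomial.C (s i) -
        (((i : ℤ) + 1) * (2 * (i : ℤ) + 1 - ((k : ℤ) + 1))) • fseq s (i + 1)) * fseq s (k + 1 - i)),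
      Rat.smul_def]
    simp only [eval_mul, eval_sub, eval_C, zsmul_eq_mul, eval_intCast]
    push_cast
    ring

namespace SolvesODE

section

variable {S Q : ℂ⟦X⟧}

theorem coeff_eq (h : SolvesODE S Q) (k : ℕ) :
    ∑ i ∈ range (k + 1), ((i : ℂ) + 1) * (2 * i + 1 - k) * coeff (i + 1) Q * coeff (k - i) Q =
      ∑ i ∈ range (k + 1), coeff i S * coeff (k - i) Q := by
  have hk := congrArg (coeff k) h
  rwa [coeff_ode_lhs, coeff_mul, Nat.sum_antidiagonal_eq_sum_range_succ_mk] at hk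

theorem coeff_succ (h : SolvesODE S Q) (h0 : constantCoeff Q ≠ 0) (k : ℕ) :
    coeff (k + 1) Q =
      (((k : ℂ) + 1) ^ 2)⁻¹ * (coeff k S + (constantCoeff Q)⁻¹ * ∑ i ∈ range k,
        (coeff i S - ((i : ℂ) + 1) * (2 * i + 1 - k) * coeff (i + 1) Q) * coeff (k - i) Q) := by
  have hk := h.coeff_eq k
  rw [sum_range_succ, sum_range_succ (fun i => coeff i S * coeff (k - i) Q), Nat.sub_self,
    coeff_zero_eq_constantCoeff] at hk
  set A := ∑ i ∈ range k, coeff i S * coeff (k - i) Q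
  set B := ∑ i ∈ range k, ((i : ℂ) + 1) * (2 * i + 1 - k) * coeff (i + 1) Q * coeff (k - i) Q
  have hsplit : ∑ i ∈ range k,
      (coeff i S - ((i : ℂ) + 1) * (2 * i + 1 - k) * coeff (i + 1) Q) * coeff (k - i) Q =
        A - B := by
    rw [← sum_sub_distrib]
    exact sum_congr rfl fun i _ => by ring
  rw [hsplit]
  field_simp
  linear_combination hk

theorem coeff_eq_eval_fseq (h : SolvesODE S Q) (h0 : constantCoeff Q ≠ 0) (n : ℕ) (hn : 1 ≤ n) :
    coeff n Q = (fseq (fun j => coeff j S) n).eval (constantCoeff Q)⁻¹ := by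
  induction n using Nat.strong_induction_on with
  | _ n ih =>
    obtain ⟨k, rfl⟩ : ∃ k, n = k + 1 := ⟨n - 1, by omega⟩
    rw [h.coeff_succ h0, fseq_eval_succ]
    congr 3
    refine sum_congr rfl fun i hi => ?_
    have hik := mem_range.mp hi
    rw [ih (i + 1) (by omega) (by omega), ih (k - i) (by omega) (by omega)]

end

section

variable {S : Polynomial ℂ} {Q : ℂ⟦X⟧}

theorem coeff_eq_zero_of_le {m : ℕ} (h : SolvesODE S Q) (hS : S.degree ≤ m)
    (h0 : constantCoeff Q ≠ 0) (hgap : ∀ n, m + 3 ≤ n → n ≤ 2 * m + 3 → coeff n Q = 0)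
    (n : ℕ) (hn : m + 3 ≤ n) : coeff n Q = 0 := by
  induction n using Nat.strong_induction_on with
  | _ n ih =>
    by_cases hsmall : n ≤ 2 * m + 3
    · exact hgap n hn hsmall
    obtain ⟨k, rfl⟩ : ∃ k, n = k + 1 := ⟨n - 1, by omega⟩
    have hrhs : ∑ i ∈ range (k + 1), coeff i (S : ℂ⟦X⟧) * coeff (k - i) Q = 0 := by
      refine sum_eq_zero fun i hi => ?_
      by_cases him : i ≤ m
      · rw [ih (k - i) (by omega) (by omega), mul_zero]
      · rw [Polynomial.coeff_coe, Polynomial.coeff_eq_zero_of_degree_lt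
          (hS.trans_lt (by exact_mod_cast not_le.mp him)), zero_mul]
    have hk := h.coeff_eq k
    rw [sum_range_succ, hrhs, sum_range_ode_terms_eq_zero (d := m + 2) Q (by omega)
      fun n hn hnk => ih n (by omega) (by omega), zero_add, Nat.sub_self,
      coeff_zero_eq_constantCoeff,
      show ((k : ℂ) + 1) * (2 * k + 1 - k) = ((k + 1 : ℕ) : ℂ) ^ 2 by push_cast; ring] at hk
    simpa [h0, Nat.cast_add_one_ne_zero] using hk

theorem add_two_le_natDegree {P : Polynomial ℂ} (h : SolvesODE S P) (hS : S ≠ 0) (hP : P ≠ 0) :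
    S.natDegree + 2 ≤ P.natDegree := by
  by_contra! hlt
  set m := S.natDegree
  set d := P.natDegree
  have hP_high : ∀ n, d < n → coeff n (P : ℂ⟦X⟧) = 0 := fun n hn => by
    rw [Polynomial.coeff_coe, Polynomial.coeff_eq_zero_of_natDegree_lt hn]
  -- coefficient `m + d` of the equation: the left side vanishes, the right side is `s_m p_d`
  have hrhs : ∑ i ∈ range (m + d + 1), coeff i (S : ℂ⟦X⟧) * coeff (m + d - i) (P : ℂ⟦X⟧) =
      S.leadingCoeff * P.leadingCoeff := by
    rw [sum_eq_single_of_mem m (mem_range.mpr (by omega)), Nat.add_sub_cancel_left,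
      Polynomial.coeff_coe, Polynomial.coeff_coe]
    · rfl
    intro i hi him
    rcases lt_or_gt_of_ne him with him | him
    · rw [hP_high _ (by omega), mul_zero]
    · rw [Polynomial.coeff_coe, Polynomial.coeff_eq_zero_of_natDegree_lt him, zero_mul]
  have hk := h.coeff_eq (m + d)
  rw [sum_range_succ, hrhs, sum_range_ode_terms_eq_zero (d := d) _ (by omega)
    fun n hn _ => hP_high n hn, hP_high _ (by omega), mul_zero, zero_mul, zero_add] at hk
  exact mul_ne_zero (Polynomial.leadingCoeff_ne_zero.mpr hS)
    (Polynomial.leadingCoeff_ne_zero.mpr hP) hk.symm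

end

end SolvesODE

/-- Let `S` be a complex polynomial of degree `m` and let `Q` be a
formal power series solution of the ODE with `Q(0) ≠ 0`, such that `Q(0)⁻¹` is a common
zero of `f_S^i` for all `m+3 ≤ i ≤ 2m+3`. Then `Q` is a polynomial of degree exactly `m+2`. -/
theorem stmt8 (S : Polynomial ℂ) (m : ℕ) (hS : S.degree = m)
    (Q : PowerSeries ℂ)
    (hode : SolvesODE (S : PowerSeries ℂ) Q)
    (h0 : constantCoeff Q ≠ 0)
    (hroot : ∀ i : ℕ, m + 3 ≤ i → i ≤ 2 * m + 3 →
      (fseq (fun n => S.coeff n) i).eval ((constantCoeff Q)⁻¹) = 0) :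
    ∃ P : Polynomial ℂ, P.degree = (m + 2 : ℕ) ∧ Q = (P : PowerSeries ℂ) := by
  have hS0 : S ≠ 0 := by rintro rfl; simp at hS
  have hvan := hode.coeff_eq_zero_of_le hS.le h0 fun n hn hn' => by
    rw [hode.coeff_eq_eval_fseq h0 n (by omega)]
    simpa using hroot n hn hn'
  set P := trunc (m + 3) Q
  have hQ : Q = P := eq_trunc_of_coeff_eq_zero hvan
  have hP0 : P ≠ 0 := fun hP => h0 (by rw [hQ, hP]; simp)
  refine ⟨P, ?_, hQ⟩
  have hlow := (hQ ▸ hode).add_two_le_natDegree hS0 hP0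
  have hhigh : P.natDegree < m + 3 := natDegree_trunc_lt Q (m + 2)
  have hm := Polynomial.natDegree_eq_of_degree_eq_some hS
  rw [Polynomial.degree_eq_natDegree hP0]
  exact_mod_cast (by omega : P.natDegree = m + 2)
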